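/- Fix positive constants κ̄, Rg, T∞, ρl, R*, σ, ρ*, p∞, a real constant μl ≥ 0, and γ > 1, satisfying the equilibrium relation Rg·T∞·ρ* = p∞ + 2σ/R*. If ξ ∈ ℝ satisfies ξ ≠ −π²κ̄j² for all integers j ≥ 1 and Q(ξ) = 0, then ξ < 0. -/

import Mathlib

set_option maxHeartbeats 1000000


open Real Complex

/-- The meromorphic function `Q` from the linearized bubble dynamics. -/
noncomputable def Q (κ Rg T ρl Rs σ ρs μl γ : ℝ) (τ : ℂ) : ℂ :=
  ((1 / (Rg * T) : ℝ) : ℂ) *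
      (((4 * Real.pi / (3 * γ) : ℝ) : ℂ) +
        ((8 * (γ - 1) / (Real.pi * γ) : ℝ) : ℂ) *
          ∑' j : ℕ+, ((Real.pi ^ 2 * κ : ℝ) : ℂ) /
            (((Real.pi ^ 2 * κ * ((j : ℕ) : ℝ) ^ 2 : ℝ) : ℂ) + τ)) *
      (((ρl * Rs : ℝ) : ℂ) * τ ^ 2 + ((4 * μl / Rs : ℝ) : ℂ) * τ - ((2 * σ / Rs ^ 2 : ℝ) : ℂ)) +
    ((4 * Real.pi * ρs / Rs : ℝ) : ℂ)

theorem real_roots_of_Q_are_negative (κ Rg T ρl Rs σ ρs pinf μl γ : ℝ)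
    (hκ : 0 < κ) (hRg : 0 < Rg) (hT : 0 < T) (hρl : 0 < ρl) (hRs : 0 < Rs)
    (hσ : 0 < σ) (hρs : 0 < ρs) (hp : 0 < pinf) (hμl : 0 ≤ μl) (hγ : 1 < γ)
    (heq : Rg * T * ρs = pinf + 2 * σ / Rs)
    (ξ : ℝ)
    (hξ : ∀ j : ℕ+, ξ ≠ -(Real.pi ^ 2 * κ * ((j : ℕ) : ℝ) ^ 2))
    (hQ : Q κ Rg T ρl Rs σ ρs μl γ ((ξ : ℝ) : ℂ) = 0) :
    ξ < 0 := by
  have hmh : True := trivial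
  by_contra hneg
  push_neg at hneg
  have hπ := Real.pi_pos
  have hγ0 : (0:ℝ) < γ := by linarith
  -- the real series
  set f : ℕ+ → ℝ := fun j => (Real.pi ^ 2 * κ) / (Real.pi ^ 2 * κ * ((j:ℕ):ℝ) ^ 2 + ξ)
    with hfdef
  have hden : ∀ j : ℕ+, 0 < Real.pi ^ 2 * κ * ((j:ℕ):ℝ) ^ 2 + ξ := by
    intro j
    have hj : (1:ℝ) ≤ ((j:ℕ):ℝ) := by exact_mod_cast j.one_le
    have hj2 : (1:ℝ) ≤ ((j:ℕ):ℝ) ^ 2 := one_le_pow₀ hj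
    nlinarith [mul_pos (pow_pos hπ 2) hκ]
  have hfnonneg : ∀ j : ℕ+, 0 ≤ f j := fun j =>
    le_of_lt (div_pos (by positivity) (hden j))
  have hfle : ∀ j : ℕ+, f j ≤ 1 / ((j:ℕ):ℝ) ^ 2 := by
    intro j
    have hj : (1:ℝ) ≤ ((j:ℕ):ℝ) := by exact_mod_cast j.one_le
    rw [hfdef, div_le_div_iff₀ (hden j) (by positivity)]
    nlinarith
  have hinj : Function.Injective (fun j : ℕ+ => (j : ℕ)) := fun a b h => PNat.coe_injective h
  have hg : Summable (fun j : ℕ+ => 1 / ((j:ℕ):ℝ) ^ 2) :=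
    hasSum_zeta_two.summable.comp_injective hinj
  have hsum : Summable f := Summable.of_nonneg_of_le hfnonneg hfle hg
  set S : ℝ := ∑' j : ℕ+, f j with hSdef
  have hS0 : 0 ≤ S := tsum_nonneg hfnonneg
  have hSle : S ≤ Real.pi ^ 2 / 6 := by
    calc S ≤ ∑' j : ℕ+, 1 / ((j:ℕ):ℝ) ^ 2 := Summable.tsum_le_tsum hfle hsum hg
      _ ≤ ∑' n : ℕ, 1 / (n:ℝ) ^ 2 :=
        tsum_comp_le_tsum_of_inj hasSum_zeta_two.summable (fun n => by positivity) hinj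
      _ = Real.pi ^ 2 / 6 := hasSum_zeta_two.tsum_eq
  -- the complex series is the coercion of the real one
  have hcast : (∑' j : ℕ+, ((Real.pi ^ 2 * κ : ℝ) : ℂ) /
        (((Real.pi ^ 2 * κ * ((j : ℕ) : ℝ) ^ 2 : ℝ) : ℂ) + ((ξ:ℝ):ℂ))) = ((S : ℝ) : ℂ) := by
    rw [hSdef, Complex.ofReal_tsum]
    congr 1
    funext j
    rw [hfdef]
    push_cast
    ring
  -- Q at ξ is the coercion of a real number
  set B : ℝ := ρl * Rs * ξ ^ 2 + 4 * μl / Rs * ξ - 2 * σ / Rs ^ 2 with hBdef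
  set A : ℝ := 4 * Real.pi / (3 * γ) + 8 * (γ - 1) / (Real.pi * γ) * S with hAdef
  have hQr : Q κ Rg T ρl Rs σ ρs μl γ ((ξ:ℝ):ℂ)
      = (((1 / (Rg * T)) * A * B + 4 * Real.pi * ρs / Rs : ℝ) : ℂ) := by
    rw [Q, hcast, hAdef, hBdef]
    push_cast
    ring
  rw [hQr] at hQ
  have hE : (1 / (Rg * T)) * A * B + 4 * Real.pi * ρs / Rs = 0 := by
    exact_mod_cast hQ
  -- bounds on A
  have hcoef : (0:ℝ) ≤ 8 * (γ - 1) / (Real.pi * γ) :=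
    div_nonneg (by nlinarith) (by positivity)
  have hA0 : 0 ≤ A := by
    rw [hAdef]
    have h1 : (0:ℝ) < 4 * Real.pi / (3 * γ) := div_pos (by positivity) (by nlinarith)
    nlinarith [mul_nonneg hcoef hS0]
  have hAle : A ≤ 4 * Real.pi / 3 := by
    have h1 : 8 * (γ - 1) / (Real.pi * γ) * S ≤ 8 * (γ - 1) / (Real.pi * γ) * (Real.pi ^ 2 / 6) :=
      mul_le_mul_of_nonneg_left hSle hcoef
    have h2 : 4 * Real.pi / (3 * γ) + 8 * (γ - 1) / (Real.pi * γ) * (Real.pi ^ 2 / 6)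
        = 4 * Real.pi / 3 := by
      field_simp
      ring
    rw [hAdef]
    linarith
  -- lower bound for B
  have hBlb : -(2 * σ / Rs ^ 2) ≤ B := by
    rw [hBdef]
    have h1 : 0 ≤ ρl * Rs * ξ ^ 2 := by positivity
    have h2 : 0 ≤ 4 * μl / Rs * ξ := mul_nonneg (by positivity) hneg
    linarith
  -- key positivity using the equilibrium relation
  have hd : (2 * σ / Rs) / (Rg * T) < ρs := by
    rw [div_lt_iff₀ (by positivity)]
    nlinarith [div_pos (mul_pos (by norm_num : (0:ℝ) < 2) hσ) hRs]
  have hkey : 4 * Real.pi * ρs / Rs - (1 / (Rg * T)) * (4 * Real.pi / 3) * (2 * σ / Rs ^ 2)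
      = (4 * Real.pi / (3 * Rs)) * (3 * ρs - (2 * σ / Rs) / (Rg * T)) := by
    field_simp
  have hkeypos : 0 < 4 * Real.pi * ρs / Rs - (1 / (Rg * T)) * (4 * Real.pi / 3) * (2 * σ / Rs ^ 2) := by
    rw [hkey]
    have h1 : (0:ℝ) < 4 * Real.pi / (3 * Rs) := by positivity
    nlinarith
  have hRgT : (0:ℝ) < 1 / (Rg * T) := by positivity
  rcases le_or_gt 0 B with hB | hB
  · have h1 : 0 ≤ (1 / (Rg * T)) * A * B := mul_nonneg (mul_nonneg hRgT.le hA0) hB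
    have h2 : (0:ℝ) < 4 * Real.pi * ρs / Rs := by positivity
    linarith
  · have h1 : (1 / (Rg * T)) * (4 * Real.pi / 3) * B ≤ (1 / (Rg * T)) * A * B := by
      apply mul_le_mul_of_nonpos_right _ hB.le
      exact mul_le_mul_of_nonneg_left hAle hRgT.le
    have h2 : (1 / (Rg * T)) * (4 * Real.pi / 3) * (-(2 * σ / Rs ^ 2))
        ≤ (1 / (Rg * T)) * (4 * Real.pi / 3) * B :=
      mul_le_mul_of_nonneg_left hBlb (by positivity)
    nlinarith
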